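/- arXiv:math/0204008 — 3 statements merged into one kernel-verified Lean document; each statement's English description precedes it below -/
import Mathlib

section
/- Let Σ = σ²(I − R Rᵀ) with R ∈ ℝ^{n×n}, 0 < ‖Rᵀ R‖ ≤ 1, σ > 0, and let γ̂ ≥ 0 satisfy 2γ̂σ² < 1. Then for every v ∈ ℝⁿ, ⟨Rv, (I − 2γ̂Σ)⁻¹ R v⟩ ≤ ‖v‖². More precisely, ‖Rᵀ (I − 2γ̂σ²(I − R Rᵀ))⁻¹ R‖ ≤ ((1 − 2γ̂σ²)‖Rᵀ R‖⁻¹ + 2γ̂σ²)⁻¹ ≤ 1. -/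
set_option maxHeartbeats 1000000

open Matrix
open scoped Matrix.Norms.L2Operator
open scoped MatrixOrder

section Helpers

variable {n : ℕ}

private lemma dot_self_eq_norm_sq (v : Fin n → ℝ) :
    v ⬝ᵥ v = ‖(WithLp.equiv 2 (Fin n → ℝ)).symm v‖ ^ 2 := by
  rw [show v ⬝ᵥ v = inner ℝ ((WithLp.equiv 2 (Fin n → ℝ)).symm v) ((WithLp.equiv 2 (Fin n → ℝ)).symm v)
    from by simp only [PiLp.inner_apply, dotProduct, RCLike.inner_apply, WithLp.equiv_symm_apply, conj_trivial], real_inner_self_eq_norm_sq]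

private lemma mulVec_dot (A : Matrix (Fin n) (Fin n) ℝ) (v u : Fin n → ℝ) :
    (A *ᵥ v) ⬝ᵥ u = v ⬝ᵥ (Aᵀ *ᵥ u) := by
  rw [dotProduct_comm, dotProduct_mulVec, ← mulVec_transpose, dotProduct_comm]

private lemma dot_mulVec_le (A : Matrix (Fin n) (Fin n) ℝ) (v : Fin n → ℝ) :
    v ⬝ᵥ (A *ᵥ v) ≤ ‖A‖ * (v ⬝ᵥ v) := by
  have h1 := A.l2_opNorm_mulVec ((WithLp.equiv 2 (Fin n → ℝ)).symm v)
  have h2 := real_inner_le_norm ((WithLp.equiv 2 (Fin n → ℝ)).symm v)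
    ((WithLp.equiv 2 (Fin n → ℝ)).symm (A *ᵥ v))
  have he : v ⬝ᵥ (A *ᵥ v)
      = inner ℝ ((WithLp.equiv 2 (Fin n → ℝ)).symm v) ((WithLp.equiv 2 (Fin n → ℝ)).symm (A *ᵥ v)) := by
    simp only [PiLp.inner_apply, dotProduct, RCLike.inner_apply, WithLp.equiv_symm_apply, conj_trivial, mul_comm]
  rw [he, dot_self_eq_norm_sq]
  have hn : (0 : ℝ) ≤ ‖(WithLp.equiv 2 (Fin n → ℝ)).symm v‖ := norm_nonneg _
  calc inner ℝ ((WithLp.equiv 2 (Fin n → ℝ)).symm v) ((WithLp.equiv 2 (Fin n → ℝ)).symm (A *ᵥ v))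
      ≤ ‖(WithLp.equiv 2 (Fin n → ℝ)).symm v‖ * ‖(WithLp.equiv 2 (Fin n → ℝ)).symm (A *ᵥ v)‖ := h2
    _ ≤ ‖(WithLp.equiv 2 (Fin n → ℝ)).symm v‖ * (‖A‖ * ‖(WithLp.equiv 2 (Fin n → ℝ)).symm v‖) :=
        mul_le_mul_of_nonneg_left h1 hn
    _ = ‖A‖ * ‖(WithLp.equiv 2 (Fin n → ℝ)).symm v‖ ^ 2 := by ring

private lemma psd_smul {A : Matrix (Fin n) (Fin n) ℝ} (hA : A.PosSemidef) {c : ℝ} (hc : 0 ≤ c) :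
    (c • A).PosSemidef := by
  refine .of_dotProduct_mulVec_nonneg ?_ fun x => ?_
  · unfold Matrix.IsHermitian
    rw [conjTranspose_smul, hA.1.eq, star_trivial]
  · rw [smul_mulVec, dotProduct_smul, smul_eq_mul]
    exact mul_nonneg hc (hA.dotProduct_mulVec_nonneg x)

private lemma pd_smul {A : Matrix (Fin n) (Fin n) ℝ} (hA : A.PosDef) {c : ℝ} (hc : 0 < c) :
    (c • A).PosDef := by
  refine .of_dotProduct_mulVec_pos ?_ fun x hx => ?_
  · unfold Matrix.IsHermitian
    rw [conjTranspose_smul, hA.1.eq, star_trivial]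
  · rw [smul_mulVec, dotProduct_smul, smul_eq_mul]
    exact mul_pos hc (hA.dotProduct_mulVec_pos hx)

private lemma norm_le_of_bound (Q : Matrix (Fin n) (Fin n) ℝ) {c : ℝ} (hc : 0 ≤ c)
    (h : ∀ v : Fin n → ℝ, (Q *ᵥ v) ⬝ᵥ (Q *ᵥ v) ≤ c ^ 2 * (v ⬝ᵥ v)) : ‖Q‖ ≤ c := by
  rw [Matrix.l2_opNorm_def]
  refine ContinuousLinearMap.opNorm_le_bound _ hc fun x => ?_
  show ‖(EuclideanSpace.equiv (Fin n) ℝ).symm (Q *ᵥ x)‖ ≤ c * ‖x‖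
  have h1 : ‖(EuclideanSpace.equiv (Fin n) ℝ).symm (Q *ᵥ x)‖ ^ 2 ≤ (c * ‖x‖) ^ 2 := by
    have h2 := h ((WithLp.equiv 2 (Fin n → ℝ)) x)
    rw [dot_self_eq_norm_sq, dot_self_eq_norm_sq] at h2
    calc ‖(EuclideanSpace.equiv (Fin n) ℝ).symm (Q *ᵥ x)‖ ^ 2
        = ‖(WithLp.equiv 2 (Fin n → ℝ)).symm (Q *ᵥ (WithLp.equiv 2 (Fin n → ℝ)) x)‖ ^ 2 := rfl
      _ ≤ c ^ 2 * ‖(WithLp.equiv 2 (Fin n → ℝ)).symm ((WithLp.equiv 2 (Fin n → ℝ)) x)‖ ^ 2 := h2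
      _ = (c * ‖x‖) ^ 2 := by rw [(WithLp.equiv 2 (Fin n → ℝ)).symm_apply_apply]; ring
  exact (pow_le_pow_iff_left₀ (norm_nonneg _) (mul_nonneg hc (norm_nonneg _)) two_ne_zero).mp h1

private lemma norm_le_of_quadratic {A : Matrix (Fin n) (Fin n) ℝ} (hA : A.PosSemidef) {c : ℝ}
    (hc : 0 ≤ c) (h : ∀ v : Fin n → ℝ, v ⬝ᵥ (A *ᵥ v) ≤ c * (v ⬝ᵥ v)) : ‖A‖ ≤ c := by
  have hQt : (CFC.sqrt A)ᵀ = CFC.sqrt A := by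
    have := (CFC.sqrt_nonneg A).posSemidef.1.eq
    rwa [conjTranspose_eq_transpose_of_trivial] at this
  have hq : ∀ v : Fin n → ℝ, (CFC.sqrt A *ᵥ v) ⬝ᵥ (CFC.sqrt A *ᵥ v) = v ⬝ᵥ (A *ᵥ v) := by
    intro v
    rw [mulVec_dot, mulVec_mulVec, hQt, CFC.sqrt_mul_sqrt_self A hA.nonneg]
  have hQle : ‖CFC.sqrt A‖ ≤ Real.sqrt c := by
    refine norm_le_of_bound _ (Real.sqrt_nonneg c) fun v => ?_
    rw [hq v, Real.sq_sqrt hc]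
    exact h v
  have hnormA : ‖A‖ = ‖CFC.sqrt A‖ * ‖CFC.sqrt A‖ := by
    conv_lhs => rw [← CFC.sqrt_mul_sqrt_self A hA.nonneg]
    nth_rewrite 1 [← (CFC.sqrt_nonneg A).posSemidef.1.eq]
    exact (CFC.sqrt A).l2_opNorm_conjTranspose_mul_self
  calc ‖A‖ = ‖CFC.sqrt A‖ * ‖CFC.sqrt A‖ := hnormA
    _ ≤ Real.sqrt c * Real.sqrt c :=
        mul_le_mul hQle hQle (norm_nonneg _) (Real.sqrt_nonneg _)
    _ = c := Real.mul_self_sqrt hc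

end Helpers

/-- Let `Σ = σ²(I − RRᵀ)` with `0 < ‖RᵀR‖ ≤ 1` and `2γ̂σ² < 1`. Then
`⟨Rv, (I − 2γ̂Σ)⁻¹Rv⟩ ≤ ‖v‖²` for all `v`; more precisely
`‖Rᵀ(I − 2γ̂σ²(I − RRᵀ))⁻¹R‖ ≤ ((1 − 2γ̂σ²)‖RᵀR‖⁻¹ + 2γ̂σ²)⁻¹ ≤ 1`. -/
theorem quadratic_form_bound {n : ℕ}
    (R : Matrix (Fin n) (Fin n) ℝ) (σ γ : ℝ) (hσ : 0 < σ)
    (hR0 : 0 < ‖Rᵀ * R‖) (hR1 : ‖Rᵀ * R‖ ≤ 1) (hγ0 : 0 ≤ γ) (hγ : 2 * γ * σ ^ 2 < 1) :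
    (∀ v : Fin n → ℝ,
      (R *ᵥ v) ⬝ᵥ
        (((1 : Matrix (Fin n) (Fin n) ℝ) -
            (2 * γ) • (σ ^ 2 • ((1 : Matrix (Fin n) (Fin n) ℝ) - R * Rᵀ)))⁻¹ *ᵥ (R *ᵥ v)) ≤
        v ⬝ᵥ v) ∧
    ‖Rᵀ * ((1 : Matrix (Fin n) (Fin n) ℝ) -
        (2 * γ * σ ^ 2) • ((1 : Matrix (Fin n) (Fin n) ℝ) - R * Rᵀ))⁻¹ * R‖ ≤
      ((1 - 2 * γ * σ ^ 2) * ‖Rᵀ * R‖⁻¹ + 2 * γ * σ ^ 2)⁻¹ ∧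
    ((1 - 2 * γ * σ ^ 2) * ‖Rᵀ * R‖⁻¹ + 2 * γ * σ ^ 2)⁻¹ ≤ 1 := by
  classical
  set a : ℝ := 2 * γ * σ ^ 2 with ha_def
  have ha0 : 0 ≤ a := by positivity
  have ha1 : a < 1 := hγ
  set S : Matrix (Fin n) (Fin n) ℝ := Rᵀ * R with hS_def
  set t : ℝ := ‖S‖ with ht_def
  have ht0 : 0 < t := hR0
  have ht1 : t ≤ 1 := hR1
  have hS : S.PosSemidef := by
    have := posSemidef_conjTranspose_mul_self R
    rwa [conjTranspose_eq_transpose_of_trivial] at this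
  have hP : (R * Rᵀ).PosSemidef := by
    have := posSemidef_self_mul_conjTranspose R
    rwa [conjTranspose_eq_transpose_of_trivial] at this
  set N : Matrix (Fin n) (Fin n) ℝ := (1 - a) • 1 + a • S with hN_def
  set M : Matrix (Fin n) (Fin n) ℝ := (1 - a) • 1 + a • (R * Rᵀ) with hM_def
  have hM_goal : (1 : Matrix (Fin n) (Fin n) ℝ) - a • (1 - R * Rᵀ) = M := by
    rw [hM_def, smul_sub, sub_smul, one_smul]
    abel
  have h1a : (0 : ℝ) < 1 - a := by linarith
  have hN_pd : N.PosDef :=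
    Matrix.PosDef.add_posSemidef (pd_smul Matrix.PosDef.one h1a) (psd_smul hS ha0)
  have hM_pd : M.PosDef :=
    Matrix.PosDef.add_posSemidef (pd_smul Matrix.PosDef.one h1a) (psd_smul hP ha0)
  have hNdet : IsUnit N.det := isUnit_iff_ne_zero.mpr hN_pd.det_pos.ne'
  have hMdet : IsUnit M.det := isUnit_iff_ne_zero.mpr hM_pd.det_pos.ne'
  have hNt : Nᵀ = N := by
    have := hN_pd.1.eq
    rwa [conjTranspose_eq_transpose_of_trivial] at this
  have hMR : M * R = R * N := by
    rw [hM_def, hN_def]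
    simp only [Matrix.add_mul, Matrix.mul_add, Matrix.smul_mul, Matrix.mul_smul,
      Matrix.one_mul, Matrix.mul_one, hS_def, Matrix.mul_assoc]
  have hinv : M⁻¹ * R = R * N⁻¹ := by
    have h1 : M⁻¹ * (M * R) * N⁻¹ = R * N⁻¹ := by
      rw [← Matrix.mul_assoc, Matrix.nonsing_inv_mul _ hMdet, Matrix.one_mul]
    rw [hMR] at h1
    calc M⁻¹ * R = M⁻¹ * R * N * N⁻¹ := by
          rw [Matrix.mul_nonsing_inv_cancel_right _ _ hNdet]
      _ = M⁻¹ * (R * N) * N⁻¹ := by rw [Matrix.mul_assoc M⁻¹ R N]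
      _ = R * N⁻¹ := h1
  have hA_eq : Rᵀ * M⁻¹ * R = S * N⁻¹ := by
    rw [Matrix.mul_assoc, hinv, ← Matrix.mul_assoc, ← hS_def]
  have hA_psd : (S * N⁻¹).PosSemidef := by
    rw [← hA_eq]
    have := (hM_pd.inv.posSemidef).conjTranspose_mul_mul_same R
    rwa [conjTranspose_eq_transpose_of_trivial] at this
  -- scalar bookkeeping
  set d : ℝ := (1 - a) + a * t with hd_def
  have hd0 : 0 < d := by nlinarith
  have hform : (1 - a) * t⁻¹ + a = d / t := by
    field_simp
    exact hd_def.symm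
  have hc_eq : ((1 - a) * t⁻¹ + a)⁻¹ = t / d := by
    rw [hform, inv_div]
  have hcc0 : 0 < t / d := div_pos ht0 hd0
  have hc1 : ((1 - a) * t⁻¹ + a)⁻¹ ≤ 1 := by
    have hti : t * t⁻¹ = 1 := mul_inv_cancel₀ ht0.ne'
    have h2 : 1 ≤ t⁻¹ := by nlinarith
    have hge : 1 ≤ (1 - a) * t⁻¹ + a := by nlinarith
    exact inv_le_one_of_one_le₀ hge
  -- the two basic PSD facts
  have L1 : ((t • 1 : Matrix (Fin n) (Fin n) ℝ) - S).PosSemidef := by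
    refine .of_dotProduct_mulVec_nonneg ?_ fun x => ?_
    · unfold Matrix.IsHermitian
      rw [conjTranspose_sub, conjTranspose_smul, conjTranspose_one, hS.1.eq, star_trivial]
    · rw [star_trivial, Matrix.sub_mulVec, dotProduct_sub, smul_mulVec, Matrix.one_mulVec,
        dotProduct_smul, smul_eq_mul]
      have hbound := dot_mulVec_le S x
      rw [← ht_def] at hbound
      linarith
  have hQt : (CFC.sqrt S)ᵀ = CFC.sqrt S := by
    have := (CFC.sqrt_nonneg S).posSemidef.1.eq
    rwa [conjTranspose_eq_transpose_of_trivial] at this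
  have L2 : ((t • S) - S * S).PosSemidef := by
    have key : CFC.sqrt S * ((t • 1 : Matrix (Fin n) (Fin n) ℝ) - S) * CFC.sqrt S
        = (t • S) - S * S := by
      rw [Matrix.mul_sub, Matrix.sub_mul]
      congr 1
      · rw [Matrix.mul_smul, Matrix.mul_one, Matrix.smul_mul, CFC.sqrt_mul_sqrt_self S hS.nonneg]
      · have q2 : CFC.sqrt S * CFC.sqrt S = S := CFC.sqrt_mul_sqrt_self S hS.nonneg
        generalize CFC.sqrt S = Q at q2 ⊢
        rw [← q2]
        simp only [Matrix.mul_assoc]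
    have := L1.conjTranspose_mul_mul_same (CFC.sqrt S)
    rw [conjTranspose_eq_transpose_of_trivial, hQt, key] at this
    exact this
  -- the algebraic identity
  have hexp : (t / d) • (N * N) - N * S
      = ((1 - a) / d * (1 - a)) • ((t • 1 : Matrix (Fin n) (Fin n) ℝ) - S)
        + ((1 - a) / d * a) • ((t • S) - S * S) := by
    rw [hN_def]
    simp only [Matrix.add_mul, Matrix.mul_add, Matrix.smul_mul, Matrix.mul_smul,
      Matrix.one_mul, Matrix.mul_one, smul_smul, smul_sub, smul_add]
    match_scalars <;> field_simp <;> ring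
  have hD : ((t / d) • (N * N) - N * S).PosSemidef := by
    rw [hexp]
    exact (psd_smul L1 (by positivity)).add (psd_smul L2 (by positivity))
  -- the quadratic bound
  have qb : ∀ v : Fin n → ℝ, v ⬝ᵥ ((S * N⁻¹) *ᵥ v) ≤ (t / d) * (v ⬝ᵥ v) := by
    intro v
    have hv : v = N *ᵥ (N⁻¹ *ᵥ v) := by
      rw [Matrix.mulVec_mulVec, Matrix.mul_nonsing_inv _ hNdet, Matrix.one_mulVec]
    set w : Fin n → ℝ := N⁻¹ *ᵥ v with hw_def
    have e1 : (S * N⁻¹) *ᵥ v = S *ᵥ w := by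
      rw [hw_def, ← Matrix.mulVec_mulVec]
    have e2 : v ⬝ᵥ ((S * N⁻¹) *ᵥ v) = w ⬝ᵥ ((N * S) *ᵥ w) := by
      conv_lhs => rw [e1, hv]
      rw [mulVec_dot, hNt, Matrix.mulVec_mulVec]
    have e3 : v ⬝ᵥ v = w ⬝ᵥ ((N * N) *ᵥ w) := by
      conv_lhs => rw [hv]
      rw [mulVec_dot, hNt, Matrix.mulVec_mulVec]
    rw [e2, e3]
    have := hD.dotProduct_mulVec_nonneg w
    rw [star_trivial, Matrix.sub_mulVec, dotProduct_sub, smul_mulVec,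
      dotProduct_smul, smul_eq_mul] at this
    linarith
  have hnorm : ‖S * N⁻¹‖ ≤ t / d := norm_le_of_quadratic hA_psd hcc0.le qb
  refine ⟨?_, ?_, hc1⟩
  · intro v
    rw [smul_smul, ← ha_def, hM_goal]
    have e1 : (R *ᵥ v) ⬝ᵥ (M⁻¹ *ᵥ (R *ᵥ v)) = v ⬝ᵥ ((S * N⁻¹) *ᵥ v) := by
      rw [mulVec_dot, Matrix.mulVec_mulVec, Matrix.mulVec_mulVec, hA_eq]
    rw [e1]
    have h2 := qb v
    have h3 : 0 ≤ v ⬝ᵥ v := by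
      have := dotProduct_star_self_nonneg v
      rwa [star_trivial] at this
    have h4 : t / d ≤ 1 := by rw [← hc_eq]; exact hc1
    nlinarith
  · rw [hM_goal, hA_eq, hc_eq]
    exact hnorm
end

section
/- Fix constants 0 ≤ s₁ ≤ s₂ ≤ ∞. Let φ : [0,∞) → [0,∞) be continuously differentiable, monotonically increasing, with φ(s₂) = 1, and let φ₀ : [0,∞) → ℝ be continuously differentiable with φ₀(s) ≤ 0 for all s ≤ s₁. Let X ≥ 0 be a random variable such that P(X < s) ≥ φ₀(s) for all s ≥ 0. Then for all t ≥ 0, 𝔼[1_{[0,t)}(X) · φ̂(X)] ≤ φ̂(t) · P(X < t) − ∫_{s₁∧t}^{s₂∧t} φ′(s) φ₀(s) ds, where φ̂(s) = min(φ(s), 1). -/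
/-!
Write `T = s₂ ∧ t` and `m = s₁ ∧ t`. By Fubini applied to `(ω, s) ↦ 1{X ω < s} φ'(s)` on
`Ω × (0, T]`, `𝔼[φ(T) - φ(X ∧ T)] = ∫_0^T P(X < s) φ'(s) ds`. Since `φ` is increasing and
`φ(T) ≤ 1`, pointwise `1_{[0,t)}(X) φ̂(X) + φ(T) - φ(X ∧ T) ≤ φ̂(t) 1{X < t}`; taking expectations
bounds the left-hand side by `φ̂(t) P(X < t) - ∫_0^T P(X < s) φ'(s) ds`. Finally `φ' ≥ 0`, so
dropping `(0, m]` and using `φ₀ ≤ P(X < ·)` on `(m, T]` gives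
`∫_0^T P(X < s) φ'(s) ds ≥ ∫_m^T φ'(s) φ₀(s) ds`.
-/

open MeasureTheory Filter Topology Set
open scoped ProbabilityTheory

lemma integral_Ioc_eq_sub_min {f f' : ℝ → ℝ} (hf : ∀ x, HasDerivAt f (f' x) x)
    (hf' : Continuous f') (c b : ℝ) : ∫ s in Ioc c b, f' s = f b - f (min c b) := by
  rcases le_or_gt c b with hcb | hbc
  · rw [← intervalIntegral.integral_of_le hcb, min_eq_left hcb,
      intervalIntegral.integral_eq_sub_of_hasDerivAt (fun x _ => hf x)
        (hf'.intervalIntegrable c b)]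
  · simp [Ioc_eq_empty_of_le hbc.le, min_eq_right hbc.le]

lemma integral_Ioc_ite_lt {f f' : ℝ → ℝ} (hf : ∀ x, HasDerivAt f (f' x) x)
    (hf' : Continuous f') (a b x : ℝ) :
    ∫ s in Ioc a b, (if x < s then f' s else 0) = f b - f (min (max a x) b) := by
  have hind : (fun s => if x < s then f' s else 0) = (Ioi x).indicator f' := by
    ext s; simp [indicator_apply]
  rw [hind, setIntegral_indicator measurableSet_Ioi, Ioc_inter_Ioi,
    integral_Ioc_eq_sub_min hf hf']

lemma apply_le_of_coe_le {φ : ℝ → ℝ} {a c : ℝ} {s₂ : EReal} (hmono : MonotoneOn φ (Ici a))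
    (htop : s₂ = ⊤ → Tendsto φ atTop (𝓝 c)) (hend : ∀ r : ℝ, s₂ = r → φ r = c) {x : ℝ}
    (hax : a ≤ x) (hxs : (x : EReal) ≤ s₂) : φ x ≤ c := by
  induction s₂ using EReal.rec with
  | bot => exact absurd (le_bot_iff.1 hxs) (EReal.coe_ne_bot x)
  | top =>
    refine ge_of_tendsto (htop rfl) ?_
    filter_upwards [eventually_ge_atTop x] with y hxy
    exact hmono hax (hax.trans hxy) hxy
  | coe r =>
    have hxr : x ≤ r := EReal.coe_le_coe_iff.1 hxs
    exact hend r rfl ▸ hmono hax (hax.trans hxr) hxr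

lemma indicator_mul_min_add_sub_le {φ : ℝ → ℝ} (hmono : MonotoneOn φ (Ici 0)) {T t x : ℝ}
    (hT0 : 0 ≤ T) (hTt : T ≤ t) (hφT : φ T ≤ 1) (hx : 0 ≤ x) :
    (Ico 0 t).indicator (fun _ => (1 : ℝ)) x * min (φ x) 1 + (φ T - φ (min x T)) ≤
      if x < t then min (φ t) 1 else 0 := by
  by_cases hxt : x < t
  · rw [indicator_of_mem (show x ∈ Ico 0 t from ⟨hx, hxt⟩), if_pos hxt, one_mul]
    rcases le_total x T with hxT | hTx
    · have hφTt : φ T ≤ φ t := hmono hT0 (hT0.trans hTt) hTt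
      rw [min_eq_left hxT]
      linarith [min_le_left (φ x) 1, le_min hφTt hφT]
    · rw [min_eq_right hTx, sub_self, add_zero]
      exact min_le_min_right 1 (hmono hx (hx.trans hxt.le) hxt.le)
  · rw [indicator_of_notMem (show x ∉ Ico 0 t from fun h => hxt h.2), if_neg hxt,
      min_eq_right (hTt.trans (not_lt.1 hxt))]
    simp

section

variable {Ω : Type*} [MeasurableSpace Ω] {μ : Measure Ω} {X : Ω → ℝ} {f f' : ℝ → ℝ} {a b : ℝ}

lemma integral_ite_lt_const [IsFiniteMeasure μ] (hX : Measurable X) (s c : ℝ) :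
    ∫ ω, (if X ω < s then c else 0) ∂μ = μ.real {ω | X ω < s} * c := by
  have h := integral_indicator_const (μ := μ) c (hX measurableSet_Iio : MeasurableSet {ω | X ω < s})
  refine (integral_congr_ae (ae_of_all _ fun ω => ?_)).trans h
  by_cases hω : X ω < s <;> simp [hω]

lemma integrable_ite_lt_const [IsFiniteMeasure μ] (hX : Measurable X) (s c : ℝ) :
    Integrable (fun ω => if X ω < s then c else 0) μ :=
  .of_bound (Measurable.ite (measurableSet_lt hX measurable_const) measurable_const
    measurable_const).aestronglyMeasurable ‖c‖ (ae_of_all _ fun ω => by split_ifs <;> simp)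

lemma integrable_ite_lt_prod [IsFiniteMeasure μ] (hX : Measurable X) (hf' : Continuous f') :
    Integrable (Function.uncurry fun ω s => if X ω < s then f' s else 0)
      (μ.prod (volume.restrict (Ioc a b))) := by
  obtain ⟨M, hM⟩ := isCompact_Icc.exists_bound_of_continuousOn (hf'.continuousOn (s := Icc a b))
  refine .of_bound ?_ M ?_
  · exact (Measurable.ite (measurableSet_lt (hX.comp measurable_fst) measurable_snd)
      (hf'.measurable.comp measurable_snd) measurable_const).aestronglyMeasurable
  · filter_upwards [Measure.quasiMeasurePreserving_snd.ae (ae_restrict_mem measurableSet_Ioc)]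
      with q hq
    have hMq := hM q.2 (Ioc_subset_Icc_self hq)
    simp only [Function.uncurry]
    split_ifs
    · exact hMq
    · simpa using (norm_nonneg _).trans hMq

theorem integral_sub_comp_clamp_eq [IsFiniteMeasure μ] (hX : Measurable X)
    (hf : ∀ x, HasDerivAt f (f' x) x) (hf' : Continuous f') :
    ∫ ω, (f b - f (min (max a (X ω)) b)) ∂μ = ∫ s in Ioc a b, μ.real {ω | X ω < s} * f' s := by
  have := integral_integral_swap (integrable_ite_lt_prod (μ := μ) (a := a) (b := b) hX hf')
  simpa only [integral_Ioc_ite_lt hf hf', integral_ite_lt_const hX] using this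

lemma integrable_sub_comp_clamp [IsFiniteMeasure μ] (hX : Measurable X)
    (hf : ∀ x, HasDerivAt f (f' x) x) (hf' : Continuous f') :
    Integrable (fun ω => f b - f (min (max a (X ω)) b)) μ :=
  (integrable_ite_lt_prod (a := a) (b := b) hX hf').integral_prod_left.congr
    (ae_of_all _ fun ω => integral_Ioc_ite_lt hf hf' a b (X ω))

lemma integrableOn_measureReal_lt_mul [IsFiniteMeasure μ] (hX : Measurable X)
    (hf' : Continuous f') :
    IntegrableOn (fun s => μ.real {ω | X ω < s} * f' s) (Ioc a b) :=
  (integrable_ite_lt_prod (μ := μ) hX hf').integral_prod_right.congr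
    (ae_of_all _ fun s => integral_ite_lt_const hX s (f' s))

lemma integral_indicator_mul_min_le [IsFiniteMeasure μ] (hX : Measurable X)
    (hX0 : ∀ ω, 0 ≤ X ω) {φ : ℝ → ℝ} (hφ : Continuous φ) (hmono : MonotoneOn φ (Ici 0)) (hnonneg : ∀ s, 0 ≤ s → 0 ≤ φ s)
    {T t : ℝ} (hT0 : 0 ≤ T) (hTt : T ≤ t) (hφT : φ T ≤ 1)
    (hint : Integrable (fun ω => φ T - φ (min (X ω) T)) μ) :
    ∫ ω, (Ico 0 t).indicator (fun _ => (1 : ℝ)) (X ω) * min (φ (X ω)) 1 ∂μ ≤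
      min (φ t) 1 * μ.real {ω | X ω < t} - ∫ ω, (φ T - φ (min (X ω) T)) ∂μ := by
  have hint₁ : Integrable (fun ω => (Ico 0 t).indicator (fun _ => (1 : ℝ)) (X ω) *
      min (φ (X ω)) 1) μ := by
    refine .of_bound ((((measurable_const.indicator measurableSet_Ico).comp hX).mul
      ((hφ.measurable.comp hX).min measurable_const)).aestronglyMeasurable) 1
      (ae_of_all _ fun ω => ?_)
    have hφX : -1 ≤ φ (X ω) := by linarith [hnonneg _ (hX0 ω)]
    by_cases hXt : X ω ∈ Ico 0 t
    · simp [hXt, abs_le, hφX]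
    · simp [hXt]
  rw [le_sub_iff_add_le, ← integral_add hint₁ hint, mul_comm, ← integral_ite_lt_const hX]
  exact integral_mono (hint₁.add hint) (integrable_ite_lt_const hX t _)
    fun ω => indicator_mul_min_add_sub_le hmono hT0 hTt hφT (hX0 ω)

end

lemma intervalIntegral_mul_le_setIntegral_Ioc {g h P : ℝ → ℝ} {a m b : ℝ} (ham : a ≤ m)
    (hmb : m ≤ b) (hg : Continuous g) (hh : Continuous h)
    (hPg : IntegrableOn (fun s => P s * g s) (Ioc a b)) (hg0 : ∀ s ∈ Ioc a b, 0 ≤ g s)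
    (hP0 : ∀ s, 0 ≤ P s) (hhP : ∀ s ∈ Ioc m b, h s ≤ P s) :
    ∫ s in m..b, g s * h s ≤ ∫ s in Ioc a b, P s * g s := by
  have hsub : Ioc m b ⊆ Ioc a b := Ioc_subset_Ioc_left ham
  rw [intervalIntegral.integral_of_le hmb]
  calc ∫ s in Ioc m b, g s * h s ≤ ∫ s in Ioc m b, P s * g s :=
        setIntegral_mono_on (hg.mul hh).integrableOn_Ioc (hPg.mono_set hsub) measurableSet_Ioc
          fun s hs => by
            rw [mul_comm (P s)]
            exact mul_le_mul_of_nonneg_left (hhP s hs) (hg0 s (hsub hs))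
    _ ≤ ∫ s in Ioc a b, P s * g s :=
        setIntegral_mono_set hPg
          ((ae_restrict_iff' measurableSet_Ioc).2 (ae_of_all _ fun s hs =>
            mul_nonneg (hP0 s) (hg0 s hs)))
          hsub.eventuallyLE

theorem indicator_expectation_int_by_parts_general {Ω : Type*} [MeasureSpace Ω]
    (hprob : IsProbabilityMeasure (ℙ : Measure Ω))
    (X : Ω → ℝ) (hXmeas : Measurable X) (hX0 : ∀ ω, 0 ≤ X ω)
    (s₁ : ℝ) (s₂ : EReal) (hs₁ : 0 ≤ s₁) (hs₁₂ : (s₁ : EReal) ≤ s₂)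
    (φ φ₀ : ℝ → ℝ) (hφ : ContDiff ℝ 1 φ) (hφ₀ : ContDiff ℝ 1 φ₀)
    (hφmono : MonotoneOn φ (Set.Ici 0)) (hφnonneg : ∀ s : ℝ, 0 ≤ s → 0 ≤ φ s)
    (hφtop : s₂ = ⊤ → Tendsto φ atTop (𝓝 1))
    (hφend : ∀ r : ℝ, s₂ = (r : EReal) → φ r = 1)
    (hP : ∀ s : ℝ, 0 ≤ s → φ₀ s ≤ (ℙ {ω | X ω < s}).toReal)
    (t : ℝ) (ht : 0 ≤ t) :
    ∫ ω, Set.indicator (Set.Ico (0 : ℝ) t) (fun _ => (1 : ℝ)) (X ω) * min (φ (X ω)) 1 ≤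
      min (φ t) 1 * (ℙ {ω | X ω < t}).toReal -
        ∫ s in (min s₁ t)..((min s₂ (t : EReal)).toReal), deriv φ s * φ₀ s := by
  set T := (min s₂ (t : EReal)).toReal
  have hmin : ((min s₁ t : ℝ) : EReal) ≤ min s₂ t := by
    rw [EReal.coe_strictMono.monotone.map_min]; exact min_le_min_right _ hs₁₂
  have hT : (T : EReal) = min s₂ t :=
    EReal.coe_toReal ((min_le_right _ _).trans_lt (EReal.coe_lt_top t)).ne
      (ne_bot_of_le_ne_bot (EReal.coe_ne_bot _) hmin)
  have hmT : min s₁ t ≤ T := EReal.coe_le_coe_iff.1 (hT ▸ hmin)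
  have hT0 : 0 ≤ T := (le_min hs₁ ht).trans hmT
  have hTt : T ≤ t := EReal.coe_le_coe_iff.1 (hT ▸ min_le_right _ _)
  have hφT : φ T ≤ 1 := apply_le_of_coe_le hφmono hφtop hφend hT0 (hT ▸ min_le_left _ _)
  have hφ' : ∀ x, HasDerivAt φ (deriv φ x) x := fun x =>
    (hφ.differentiable one_ne_zero x).hasDerivAt
  have hφ'cont : Continuous (deriv φ) := hφ.continuous_deriv le_rfl
  have hφ'nonneg : ∀ s ∈ Ioc 0 T, 0 ≤ deriv φ s := fun s hs =>
    (hφ' s).differentiableAt.derivWithin (uniqueDiffOn_Ici 0 s hs.1.le) ▸ hφmono.derivWithin_nonneg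
  have hclamp : ∀ ω, min (max 0 (X ω)) T = min (X ω) T := fun ω => by rw [max_eq_right (hX0 ω)]
  have hlayer := integral_sub_comp_clamp_eq (μ := ℙ) (a := 0) (b := T) hXmeas hφ' hφ'cont
  have hint := integrable_sub_comp_clamp (μ := ℙ) (a := 0) (b := T) hXmeas hφ' hφ'cont
  simp only [hclamp] at hlayer hint
  calc _ ≤ min (φ t) 1 * (ℙ {ω | X ω < t}).toReal - ∫ ω, (φ T - φ (min (X ω) T)) :=
        integral_indicator_mul_min_le hXmeas hX0 hφ.continuous hφmono hφnonneg hT0 hTt hφT hint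
    _ ≤ _ := by
      rw [hlayer]
      refine sub_le_sub_left (intervalIntegral_mul_le_setIntegral_Ioc (le_min hs₁ ht) hmT
        hφ'cont hφ₀.continuous (integrableOn_measureReal_lt_mul hXmeas hφ'cont) hφ'nonneg
        (fun _ => measureReal_nonneg) fun s hs => hP s ((le_min hs₁ ht).trans hs.1.le)) _

/-- Integration-by-parts lemma: if `φ` is `C¹`, increasing on `[0,∞)`, nonnegative there,
with `φ(s₂) = 1` (interpreted as `lim_{s→∞} φ(s) = 1` when `s₂ = ∞`), `φ₀` is `C¹` with
`φ₀ ≤ 0` on `[0, s₁]`, and `X ≥ 0` is a random variable with `P(X < s) ≥ φ₀(s)` for all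
`s ≥ 0`, then for all `t ≥ 0`,
`𝔼[1_{[0,t)}(X) φ̂(X)] ≤ φ̂(t) P(X < t) − ∫_{s₁∧t}^{s₂∧t} φ′(s)φ₀(s) ds`
where `φ̂ = min(φ, 1)`. -/
theorem indicator_expectation_int_by_parts {Ω : Type*} [MeasureSpace Ω]
    (hprob : IsProbabilityMeasure (ℙ : Measure Ω))
    (X : Ω → ℝ) (hXmeas : Measurable X) (hX0 : ∀ ω, 0 ≤ X ω)
    (s₁ : ℝ) (s₂ : EReal) (hs₁ : 0 ≤ s₁) (hs₁₂ : (s₁ : EReal) ≤ s₂)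
    (φ φ₀ : ℝ → ℝ) (hφ : ContDiff ℝ 1 φ) (hφ₀ : ContDiff ℝ 1 φ₀)
    (hφmono : MonotoneOn φ (Set.Ici 0)) (hφnonneg : ∀ s : ℝ, 0 ≤ s → 0 ≤ φ s)
    (hφtop : s₂ = ⊤ → Tendsto φ atTop (𝓝 1))
    (hφend : ∀ r : ℝ, s₂ = (r : EReal) → φ r = 1)
    (hφ₀neg : ∀ s : ℝ, 0 ≤ s → s ≤ s₁ → φ₀ s ≤ 0)
    (hP : ∀ s : ℝ, 0 ≤ s → φ₀ s ≤ (ℙ {ω | X ω < s}).toReal)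
    (t : ℝ) (ht : 0 ≤ t) :
    ∫ ω, Set.indicator (Set.Ico (0 : ℝ) t) (fun _ => (1 : ℝ)) (X ω) * min (φ (X ω)) 1 ≤
      min (φ t) 1 * (ℙ {ω | X ω < t}).toReal -
        ∫ s in (min s₁ t)..((min s₂ (t : EReal)).toReal), deriv φ s * φ₀ s :=
  indicator_expectation_int_by_parts_general hprob X hXmeas hX0 s₁ s₂ hs₁ hs₁₂ φ φ₀ hφ hφ₀ hφmono
    hφnonneg hφtop hφend hP t ht
end

section
/- Let A(t), F₀(t) be continuous matrix families, ε > 0, U(t,s) the principal solution of εξ̇ = A(t)ξ, and let X̄(t) be a C¹ family of symmetric positive definite n×n matrices satisfying ε (d/dt)X̄(t) = A(t)X̄(t) + X̄(t)A(t)ᵀ + F₀(t)F₀(t)ᵀ. Fix s and define Q(v)² = U(v,s)ᵀ X̄(v)⁻¹ U(v,s). Then (d/dv) [Q(v)⁻²] = ε⁻¹ U(s,v) F₀(v) F₀(v)ᵀ U(s,v)ᵀ. In particular v ↦ Q(v)⁻² is nondecreasing in the positive semidefinite order. -/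
open Matrix
open scoped Matrix.Norms.L2Operator

/-- If `X̄(t)` is a `C¹` family of symmetric positive definite matrices solving
`ε X̄' = A X̄ + X̄ Aᵀ + F₀F₀ᵀ` and `U(t,s)` is the principal solution of `ε ξ̇ = A(t)ξ`,
then with `Q(v)² = U(v,s)ᵀ X̄(v)⁻¹ U(v,s)` we have
`(d/dv) Q(v)⁻² = ε⁻¹ U(s,v) F₀(v)F₀(v)ᵀ U(s,v)ᵀ`; in particular `v ↦ Q(v)⁻²` is
nondecreasing in the positive semidefinite order. -/
theorem Qinvsq_deriv_and_monotone {n k : ℕ} (ε : ℝ) (hε : 0 < ε)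
    (A : ℝ → Matrix (Fin n) (Fin n) ℝ) (F₀ : ℝ → Matrix (Fin n) (Fin k) ℝ)
    (hA : Continuous A) (hF₀ : Continuous F₀)
    (U : ℝ → ℝ → Matrix (Fin n) (Fin n) ℝ)
    (hU : ∀ s t : ℝ, HasDerivAt (fun r => U r s) (ε⁻¹ • (A t * U t s)) t)
    (hUinit : ∀ s : ℝ, U s s = 1)
    (hUgrp : ∀ t s : ℝ, U t s * U s t = 1)
    (Xb : ℝ → Matrix (Fin n) (Fin n) ℝ)
    (hXbC1 : ContDiff ℝ 1 Xb)
    (hXbsymm : ∀ t, (Xb t).IsSymm) (hXbpos : ∀ t, (Xb t).PosDef)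
    (hXbode : ∀ t : ℝ,
      HasDerivAt Xb (ε⁻¹ • (A t * Xb t + Xb t * (A t)ᵀ + F₀ t * (F₀ t)ᵀ)) t)
    (s : ℝ) :
    (∀ v : ℝ, HasDerivAt (fun w => ((U w s)ᵀ * (Xb w)⁻¹ * U w s)⁻¹)
        (ε⁻¹ • (U s v * (F₀ v * (F₀ v)ᵀ) * (U s v)ᵀ)) v) ∧
    (∀ v w : ℝ, v ≤ w →
      (((U w s)ᵀ * (Xb w)⁻¹ * U w s)⁻¹ - ((U v s)ᵀ * (Xb v)⁻¹ * U v s)⁻¹).PosSemidef) := by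
  -- the inverse of `Q(v)²` is `U(s,v) X̄(v) U(s,v)ᵀ`
  have hinv : ∀ w : ℝ, ((U w s)ᵀ * (Xb w)⁻¹ * U w s)⁻¹ = U s w * Xb w * (U s w)ᵀ := by
    intro w
    apply Matrix.inv_eq_left_inv
    have h1 : (U s w)ᵀ * (U w s)ᵀ = 1 := by
      rw [← Matrix.transpose_mul, hUgrp, Matrix.transpose_one]
    have h2 : Xb w * (Xb w)⁻¹ = 1 :=
      Matrix.mul_nonsing_inv _ (isUnit_iff_ne_zero.mpr (hXbpos w).det_pos.ne')
    calc U s w * Xb w * (U s w)ᵀ * ((U w s)ᵀ * (Xb w)⁻¹ * U w s)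
        = U s w * (Xb w * (((U s w)ᵀ * (U w s)ᵀ) * ((Xb w)⁻¹ * U w s))) := by
          simp only [Matrix.mul_assoc]
      _ = U s w * (Xb w * (Xb w)⁻¹ * U w s) := by rw [h1, one_mul, Matrix.mul_assoc]
      _ = 1 := by rw [h2, one_mul, hUgrp]
  -- derivative of `w ↦ U s w`
  have hVd : ∀ v : ℝ, HasDerivAt (fun w => U s w) (-(ε⁻¹ • (U s v * A v))) v := by
    intro v
    have hfun : ∀ w : ℝ, U s w = Ring.inverse (U w s) := by
      intro w
      exact (Ring.inverse_unit ⟨U w s, U s w, hUgrp w s, hUgrp s w⟩).symm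
    set u : (Matrix (Fin n) (Fin n) ℝ)ˣ := ⟨U v s, U s v, hUgrp v s, hUgrp s v⟩ with hu
    have hF : HasFDerivAt (Ring.inverse)
        (-ContinuousLinearMap.mulLeftRight ℝ _ (↑u⁻¹) (↑u⁻¹)) (U v s) :=
      hasFDerivAt_ringInverse (𝕜 := ℝ) u
    have hcomp := hF.comp_hasDerivAt v (hU s v)
    have h2 : HasDerivAt (fun w => Ring.inverse (U w s))
        ((-ContinuousLinearMap.mulLeftRight ℝ _ (↑u⁻¹) (↑u⁻¹)) (ε⁻¹ • (A v * U v s))) v := hcomp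
    simp only [← hfun] at h2
    convert h2 using 1
    rw [ContinuousLinearMap.neg_apply, ContinuousLinearMap.mulLeftRight_apply]
    show -(ε⁻¹ • (U s v * A v)) = -(U s v * (ε⁻¹ • (A v * U v s)) * U s v)
    rw [mul_smul_comm, smul_mul_assoc]
    congr 2
    rw [mul_assoc, mul_assoc, hUgrp, mul_one]
  -- derivative of `w ↦ U s w * Xb w * (U s w)ᵀ`
  have hT : ∀ v : ℝ, HasDerivAt (fun w => (U s w)ᵀ) (-(ε⁻¹ • (U s v * A v)))ᵀ v := by
    intro v
    exact (Matrix.transposeLinearEquiv (Fin n) (Fin n) ℝ ℝ).toLinearMap.toContinuousLinearMap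
      |>.hasFDerivAt.comp_hasDerivAt v (hVd v)
  have hD : ∀ v : ℝ, HasDerivAt (fun w => U s w * Xb w * (U s w)ᵀ)
      (ε⁻¹ • (U s v * (F₀ v * (F₀ v)ᵀ) * (U s v)ᵀ)) v := by
    intro v
    have h := (((hVd v).mul (hXbode v)).mul (hT v))
    refine h.congr_deriv ?_
    simp only [Pi.mul_apply, Matrix.transpose_neg, Matrix.transpose_smul, Matrix.transpose_mul,
      Matrix.mul_add, Matrix.add_mul, Matrix.neg_mul, Matrix.mul_neg, smul_mul_assoc,
      mul_smul_comm, smul_add, Matrix.mul_assoc]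
    abel
  have hDmain : ∀ v : ℝ, HasDerivAt (fun w => ((U w s)ᵀ * (Xb w)⁻¹ * U w s)⁻¹)
      (ε⁻¹ • (U s v * (F₀ v * (F₀ v)ᵀ) * (U s v)ᵀ)) v := by
    intro v
    have := hD v
    simp only [← hinv] at this
    exact this
  refine ⟨hDmain, ?_⟩
  intro v w hvw
  -- the derivative is positive semidefinite
  have hpsd : ∀ r : ℝ, (ε⁻¹ • (U s r * (F₀ r * (F₀ r)ᵀ) * (U s r)ᵀ)).PosSemidef := by
    intro r
    have heq : U s r * (F₀ r * (F₀ r)ᵀ) * (U s r)ᵀ = (U s r * F₀ r) * (U s r * F₀ r)ᵀ := by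
      simp [Matrix.transpose_mul, Matrix.mul_assoc]
    rw [heq]
    have h1 : ((U s r * F₀ r) * (U s r * F₀ r)ᵀ).PosSemidef := by
      have := Matrix.posSemidef_self_mul_conjTranspose (U s r * F₀ r)
      simpa [Matrix.conjTranspose_eq_transpose_of_trivial] using this
    refine ⟨?_, ?_⟩
    · show _ᴴ = _
      rw [Matrix.conjTranspose_smul, h1.1.eq, star_trivial]
    · exact (h1.smul (inv_nonneg.mpr hε.le)).2
  rw [posSemidef_iff_dotProduct_mulVec]
  constructor
  · -- Hermitian
    have hh : ∀ r : ℝ, (((U r s)ᵀ * (Xb r)⁻¹ * U r s)⁻¹).IsHermitian := by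
      intro r
      rw [hinv r]
      show _ᴴ = _
      rw [Matrix.conjTranspose_eq_transpose_of_trivial, Matrix.transpose_mul, Matrix.transpose_mul, Matrix.transpose_transpose,
        (hXbsymm r).eq, Matrix.mul_assoc]
    exact (hh w).sub (hh v)
  · -- quadratic form monotone
    intro x
    set φ : ℝ → ℝ := fun r => x ⬝ᵥ (((U r s)ᵀ * (Xb r)⁻¹ * U r s)⁻¹ *ᵥ x) with hφdef
    let L : Matrix (Fin n) (Fin n) ℝ →ₗ[ℝ] ℝ :=
      { toFun := fun M => x ⬝ᵥ (M *ᵥ x)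
        map_add' := by intro M N; simp [Matrix.add_mulVec, dotProduct_add]
        map_smul' := by intro c M; simp [Matrix.smul_mulVec, dotProduct_smul] }
    have hφ : ∀ r : ℝ, HasDerivAt φ
        (L (ε⁻¹ • (U s r * (F₀ r * (F₀ r)ᵀ) * (U s r)ᵀ))) r := by
      intro r
      exact (L.toContinuousLinearMap.hasFDerivAt).comp_hasDerivAt r (hDmain r)
    have hmono : φ v ≤ φ w := by
      have hdiff : Differentiable ℝ φ := fun r => (hφ r).differentiableAt
      have hderiv : ∀ r : ℝ, 0 ≤ deriv φ r := by
        intro r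
        rw [(hφ r).deriv]
        have := (hpsd r).dotProduct_mulVec_nonneg x
        simpa [L, Matrix.smul_mulVec, dotProduct_smul, smul_eq_mul] using this
      exact monotone_of_deriv_nonneg hdiff hderiv hvw
    have : x ⬝ᵥ ((((U w s)ᵀ * (Xb w)⁻¹ * U w s)⁻¹ - ((U v s)ᵀ * (Xb v)⁻¹ * U v s)⁻¹) *ᵥ x)
        = φ w - φ v := by
      simp [hφdef, Matrix.sub_mulVec, dotProduct_sub]
    simp only [star_trivial]
    rw [this]
    linarith
end
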